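/- arXiv:1904.02334 — 3 statements merged into one kernel-verified Lean document; each statement's English description precedes it below -/
import Mathlib

section
/- Let B, K, N, F be positive integers and let U ∈ ℝ^{B×N}, P ∈ ℝ^{K×N}, G ∈ ℝ^{B×K}, R ∈ ℝ^{K×N} have all entries strictly positive. Define the (block of the) cost function J̃(G, R) = Σ_{n=1}^N Σ_{k=1}^K ( P_{kn}/R_{kn} + F·log R_{kn} ) + Σ_{n=1}^N Σ_{b=1}^B ( F·log((GR)_{bn}) + U_{bn}/(2·(GR)_{bn}) ). Define the updated matrix G⁺ entrywise by G⁺_{bk} = G_{bk} · sqrt( [ ((1/(2F))·U ⊙ (GR)^{⊙(−2)}) Rᵀ ]_{bk} / [ (GR)^{⊙(−1)} Rᵀ ]_{bk} ), where ⊙ denotes entrywise (Hadamard) operations and dotted exponents are entrywise powers. Then J̃(G⁺, R) ≤ J̃(G, R). -/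
/-!
Majorisation–minimisation. At the current `G`, the `G`-dependent part of the cost is majorised
by a function that separates over the entries of the new gain matrix: concavity of `log`
bounds `F log (G'R)` by its tangent at `GR`, and convexity of `t ↦ 1 / t`, in the form of
Cauchy–Schwarz with the weights `G_bk R_kn / (GR)_bn`, bounds `1 / (G'R)`. The majoriser
touches the cost at `G`, and each of its separated terms has the form `a t + c / t`, whose
minimiser `√(c / a)` is exactly the multiplicative update.
-/

open Finset Matrix

/-- The block of the joint IVA–NMF cost function that depends on `G` and `R`:
`J̃(G,R) = Σₙ Σₖ (P_{kn}/R_{kn} + F·log R_{kn})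
        + Σₙ Σ_b (F·log((GR)_{bn}) + U_{bn}/(2(GR)_{bn}))`. -/
noncomputable def Jtilde (B K N F : ℕ) (U : Matrix (Fin B) (Fin N) ℝ)
    (P : Matrix (Fin K) (Fin N) ℝ) (G : Matrix (Fin B) (Fin K) ℝ)
    (R : Matrix (Fin K) (Fin N) ℝ) : ℝ :=
  (∑ n, ∑ k, (P k n / R k n + (F : ℝ) * Real.log (R k n))) +
  (∑ n, ∑ b, ((F : ℝ) * Real.log ((G * R) b n) + U b n / (2 * (G * R) b n)))

theorem log_sub_log_le_div {x y : ℝ} (hx : 0 < x) (hy : 0 < y) :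
    Real.log y - Real.log x ≤ (y - x) / x := by
  rw [← Real.log_div hy.ne' hx.ne', sub_div, div_self hx.ne']
  exact Real.log_le_sub_one_of_pos (div_pos hy hx)

theorem inv_sum_mul_le {ι : Type*} (s : Finset ι) {g g' w : ι → ℝ}
    (hg : 0 < ∑ i ∈ s, g i * w i) (hg' : ∀ i ∈ s, 0 < g' i) (hw : ∀ i ∈ s, 0 < w i) :
    (∑ i ∈ s, g' i * w i)⁻¹ ≤ (∑ i ∈ s, g i ^ 2 / g' i * w i) / (∑ i ∈ s, g i * w i) ^ 2 := by
  rw [le_div_iff₀ (by positivity), inv_mul_eq_div]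
  calc (∑ i ∈ s, g i * w i) ^ 2 / ∑ i ∈ s, g' i * w i
      ≤ ∑ i ∈ s, (g i * w i) ^ 2 / (g' i * w i) :=
        sq_sum_div_le_sum_sq_div s _ fun i hi => mul_pos (hg' i hi) (hw i hi)
    _ = ∑ i ∈ s, g i ^ 2 / g' i * w i := sum_congr rfl fun i hi => by
        field_simp [(hw i hi).ne']

theorem mul_log_add_div_sum_sub_le {ι : Type*} {s : Finset ι} {c u : ℝ} {g g' w : ι → ℝ}
    (hs : s.Nonempty) (hc : 0 ≤ c) (hu : 0 ≤ u) (hg : ∀ i ∈ s, 0 < g i)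
    (hg' : ∀ i ∈ s, 0 < g' i) (hw : ∀ i ∈ s, 0 < w i) :
    (c * Real.log (∑ i ∈ s, g' i * w i) + u / ∑ i ∈ s, g' i * w i)
        - (c * Real.log (∑ i ∈ s, g i * w i) + u / ∑ i ∈ s, g i * w i) ≤
      ∑ i ∈ s, (c * w i / (∑ j ∈ s, g j * w j) * (g' i - g i)
        + u * w i * g i ^ 2 / (∑ j ∈ s, g j * w j) ^ 2 * ((g' i)⁻¹ - (g i)⁻¹)) := by
  set x := ∑ i ∈ s, g i * w i
  set x' := ∑ i ∈ s, g' i * w i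
  have hx : 0 < x := sum_pos (fun i hi => mul_pos (hg i hi) (hw i hi)) hs
  have hx' : 0 < x' := sum_pos (fun i hi => mul_pos (hg' i hi) (hw i hi)) hs
  have hlog : Real.log x' - Real.log x ≤ ∑ i ∈ s, w i / x * (g' i - g i) :=
    calc Real.log x' - Real.log x ≤ (x' - x) / x := log_sub_log_le_div hx hx'
      _ = ∑ i ∈ s, w i / x * (g' i - g i) := by
        rw [← sum_sub_distrib, sum_div]
        exact sum_congr rfl fun i _ => by ring
  have hinv : x'⁻¹ - x⁻¹ ≤ ∑ i ∈ s, w i * g i ^ 2 / x ^ 2 * ((g' i)⁻¹ - (g i)⁻¹) := by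
    have hx_inv : x⁻¹ = (∑ i ∈ s, g i ^ 2 / g i * w i) / x ^ 2 := by
      have hsum : ∑ i ∈ s, g i ^ 2 / g i * w i = x :=
        sum_congr rfl fun i hi => by rw [sq, mul_div_cancel_right₀ _ (hg i hi).ne']
      rw [hsum]
      field_simp
    calc x'⁻¹ - x⁻¹
        ≤ (∑ i ∈ s, g i ^ 2 / g' i * w i) / x ^ 2 - (∑ i ∈ s, g i ^ 2 / g i * w i) / x ^ 2 := by
          rw [hx_inv]; exact sub_le_sub_right (inv_sum_mul_le s hx hg' hw) _
      _ = ∑ i ∈ s, w i * g i ^ 2 / x ^ 2 * ((g' i)⁻¹ - (g i)⁻¹) := by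
        rw [← sub_div, ← sum_sub_distrib, sum_div]
        exact sum_congr rfl fun i _ => by ring
  calc (c * Real.log x' + u / x') - (c * Real.log x + u / x)
      = c * (Real.log x' - Real.log x) + u * (x'⁻¹ - x⁻¹) := by ring
    _ ≤ c * ∑ i ∈ s, w i / x * (g' i - g i)
        + u * ∑ i ∈ s, w i * g i ^ 2 / x ^ 2 * ((g' i)⁻¹ - (g i)⁻¹) := by gcongr
    _ = _ := by
      rw [mul_sum, mul_sum, ← sum_add_distrib]
      exact sum_congr rfl fun i _ => by ring

/-- `g * √(c / a)` minimises `t ↦ a * t + g ^ 2 * c / t`. -/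
theorem mul_sub_add_mul_inv_sub_nonpos {a c g : ℝ} (ha : 0 < a) (hc : 0 < c) (hg : 0 < g) :
    a * (g * √(c / a) - g) + g ^ 2 * c * ((g * √(c / a))⁻¹ - g⁻¹) ≤ 0 := by
  set t := g * √(c / a)
  have ht : 0 < t := by positivity
  have hct : g ^ 2 * c = a * t ^ 2 := by
    rw [mul_pow, Real.sq_sqrt (div_pos hc ha).le]
    field_simp
  have hsq : a * (t - g) + a * t ^ 2 * (t⁻¹ - g⁻¹) = -(a * (t - g) ^ 2 / g) := by
    field_simp
    ring
  rw [hct, hsq, neg_nonpos]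
  positivity

theorem Matrix.mul_apply_pos {l m n α : Type*} [Fintype m] [Nonempty m] [Semiring α]
    [PartialOrder α] [IsStrictOrderedRing α] {A : Matrix l m α} {M : Matrix m n α}
    (hA : ∀ i j, 0 < A i j) (hM : ∀ i j, 0 < M i j) (i : l) (j : n) : 0 < (A * M) i j :=
  sum_pos (fun k _ => mul_pos (hA i k) (hM k j)) univ_nonempty

theorem Jtilde_sub_Jtilde_le {B K N F : ℕ} [NeZero K] {U : Matrix (Fin B) (Fin N) ℝ}
    (P : Matrix (Fin K) (Fin N) ℝ) {G G' : Matrix (Fin B) (Fin K) ℝ}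
    {R : Matrix (Fin K) (Fin N) ℝ} (hU : ∀ b n, 0 ≤ U b n) (hG : ∀ b k, 0 < G b k)
    (hG' : ∀ b k, 0 < G' b k) (hR : ∀ k n, 0 < R k n) :
    Jtilde B K N F U P G' R - Jtilde B K N F U P G R ≤
      ∑ b, ∑ k, (F * (∑ n, R k n / (G * R) b n) * (G' b k - G b k)
        + G b k ^ 2 * (∑ n, U b n / 2 * R k n / (G * R) b n ^ 2) * ((G' b k)⁻¹ - (G b k)⁻¹)) :=
  calc Jtilde B K N F U P G' R - Jtilde B K N F U P G R
      = ∑ n, ∑ b, ((F * Real.log ((G' * R) b n) + U b n / 2 / (G' * R) b n)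
          - (F * Real.log ((G * R) b n) + U b n / 2 / (G * R) b n)) := by
        simp only [Jtilde, div_div, add_sub_add_left_eq_sub, ← sum_sub_distrib]
    _ ≤ ∑ n, ∑ b, ∑ k, (F * R k n / (G * R) b n * (G' b k - G b k)
          + U b n / 2 * R k n * G b k ^ 2 / (G * R) b n ^ 2 * ((G' b k)⁻¹ - (G b k)⁻¹)) :=
        sum_le_sum fun n _ => sum_le_sum fun b _ => by
          simp only [mul_apply]
          exact mul_log_add_div_sum_sub_le univ_nonempty (Nat.cast_nonneg F)
            (div_nonneg (hU b n) zero_le_two) (fun k _ => hG b k) (fun k _ => hG' b k)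
            (fun k _ => hR k n)
    _ = _ := by
      rw [sum_comm]
      refine sum_congr rfl fun b _ => ?_
      rw [sum_comm]
      refine sum_congr rfl fun k _ => ?_
      simp only [sum_add_distrib, mul_sum, sum_mul]
      congr 1 <;> exact sum_congr rfl fun n _ => by ring

theorem gain_update_decreases_cost_general
    (B K N F : ℕ) (hK : 0 < K) (hN : 0 < N) (hF : 0 < F)
    (U : Matrix (Fin B) (Fin N) ℝ) (P : Matrix (Fin K) (Fin N) ℝ)
    (G : Matrix (Fin B) (Fin K) ℝ) (R : Matrix (Fin K) (Fin N) ℝ)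
    (hU : ∀ b n, 0 < U b n)
    (hG : ∀ b k, 0 < G b k) (hR : ∀ k n, 0 < R k n)
    (Gplus : Matrix (Fin B) (Fin K) ℝ)
    (hGplus : ∀ b k, Gplus b k = G b k * Real.sqrt
      ((((Matrix.of fun (b : Fin B) (n : Fin N) => (1 / (2 * (F : ℝ))) * U b n * ((G * R) b n)⁻¹ ^ 2) * Rᵀ :
          Matrix (Fin B) (Fin K) ℝ) b k) /
       (((Matrix.of fun (b : Fin B) (n : Fin N) => ((G * R) b n)⁻¹) * Rᵀ :
          Matrix (Fin B) (Fin K) ℝ) b k))) :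
    Jtilde B K N F U P Gplus R ≤ Jtilde B K N F U P G R := by
  have : NeZero K := ⟨hK.ne'⟩
  have : NeZero N := ⟨hN.ne'⟩
  have hGR := mul_apply_pos hG hR
  -- naming `G * R` keeps `mul_apply` from expanding it inside the update formula
  set X := G * R with hX
  simp only [mul_apply, of_apply, transpose_apply] at hGplus
  have hden : ∀ b k, 0 < ∑ n, (X b n)⁻¹ * R k n := fun b k =>
    sum_pos (fun n _ => mul_pos (inv_pos.2 (hGR b n)) (hR k n)) univ_nonempty
  have hnum : ∀ b k, 0 < ∑ n, 1 / (2 * (F : ℝ)) * U b n * (X b n)⁻¹ ^ 2 * R k n := fun b k =>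
    sum_pos (fun n _ => by have := hU b n; have := hGR b n; have := hR k n; positivity)
      univ_nonempty
  have hGplus_pos : ∀ b k, 0 < Gplus b k := fun b k => by
    rw [hGplus]
    exact mul_pos (hG b k) (Real.sqrt_pos.2 (div_pos (hnum b k) (hden b k)))
  refine sub_nonpos.1 ((Jtilde_sub_Jtilde_le P (fun b n => (hU b n).le) hG hGplus_pos hR).trans ?_)
  rw [← hX]
  refine sum_nonpos fun b _ => sum_nonpos fun k _ => ?_
  have hden_eq : ∑ n, R k n / X b n = ∑ n, (X b n)⁻¹ * R k n :=
    sum_congr rfl fun n _ => div_eq_inv_mul _ _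
  have hnum_eq : ∑ n, U b n / 2 * R k n / X b n ^ 2
      = (F : ℝ) * ∑ n, 1 / (2 * (F : ℝ)) * U b n * (X b n)⁻¹ ^ 2 * R k n := by
    have hF0 : (F : ℝ) ≠ 0 := by positivity
    rw [mul_sum]
    exact sum_congr rfl fun n _ => by field_simp
  rw [hden_eq, hnum_eq, hGplus]
  linarith [mul_nonpos_of_nonneg_of_nonpos (Nat.cast_nonneg F)
    (mul_sub_add_mul_inv_sub_nonpos (hden b k) (hnum b k) (hG b k))]

/-- Multiplicative update of the gain matrix `G` decreases the cost `J̃`. -/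
theorem gain_update_decreases_cost
    (B K N F : ℕ) (hB : 0 < B) (hK : 0 < K) (hN : 0 < N) (hF : 0 < F)
    (U : Matrix (Fin B) (Fin N) ℝ) (P : Matrix (Fin K) (Fin N) ℝ)
    (G : Matrix (Fin B) (Fin K) ℝ) (R : Matrix (Fin K) (Fin N) ℝ)
    (hU : ∀ b n, 0 < U b n) (hP : ∀ k n, 0 < P k n)
    (hG : ∀ b k, 0 < G b k) (hR : ∀ k n, 0 < R k n)
    (Gplus : Matrix (Fin B) (Fin K) ℝ)
    (hGplus : ∀ b k, Gplus b k = G b k * Real.sqrt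
      ((((Matrix.of fun (b : Fin B) (n : Fin N) => (1 / (2 * (F : ℝ))) * U b n * ((G * R) b n)⁻¹ ^ 2) * Rᵀ :
          Matrix (Fin B) (Fin K) ℝ) b k) /
       (((Matrix.of fun (b : Fin B) (n : Fin N) => ((G * R) b n)⁻¹) * Rᵀ :
          Matrix (Fin B) (Fin K) ℝ) b k))) :
    Jtilde B K N F U P Gplus R ≤ Jtilde B K N F U P G R :=
  gain_update_decreases_cost_general B K N F hK hN hF U P G R hU hG hR Gplus hGplus
end

section
/- Let B, K, N, F be positive integers and let U ∈ ℝ^{B×N}, P ∈ ℝ^{K×N}, G ∈ ℝ^{B×K}, R ∈ ℝ^{K×N} have all entries strictly positive. Define J̃(G, R) = Σ_{n=1}^N Σ_{k=1}^K ( P_{kn}/R_{kn} + F·log R_{kn} ) + Σ_{n=1}^N Σ_{b=1}^B ( F·log((GR)_{bn}) + U_{bn}/(2·(GR)_{bn}) ). Define the updated matrix R⁺ entrywise by R⁺_{kn} = R_{kn} · sqrt( [ (1/F)·P ⊙ R^{⊙(−2)} + Gᵀ((1/(2F))·U ⊙ (GR)^{⊙(−2)}) ]_{kn} / [ R^{⊙(−1)}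 + Gᵀ(GR)^{⊙(−1)} ]_{kn} ), where ⊙ denotes entrywise (Hadamard) operations and dotted exponents are entrywise powers. Then J̃(G, R⁺) ≤ J̃(G, R). -/
/-!
Majorization–minimization, one column of `R` at a time. At the current column `r`, bound both
concave logarithms by their tangent lines at `r` and the convex `1 / (G x)_b` by Jensen's
inequality with weights `G_bk r_k / (G r)_b`. The resulting surrogate touches the cost at `r`
and separates into `∑ₖ (Aₖ / xₖ + Cₖ xₖ) + const`, whose minimizer `xₖ = √(Aₖ / Cₖ)` is exactly
the multiplicative update. Hence `cost(update) ≤ surrogate(update) ≤ surrogate(r) = cost(r)`.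
-/

open Finset Matrix

lemma Real.log_le_log_add_div_sub_one {x y : ℝ} (hx : 0 < x) (hy : 0 < y) :
    Real.log y ≤ Real.log x + y / x - 1 := by
  have h := Real.log_le_sub_one_of_pos (div_pos hy hx)
  rw [Real.log_div hy.ne' hx.ne'] at h
  linarith

lemma div_sqrt_add_mul_sqrt_le {A C x : ℝ} (hA : 0 < A) (hC : 0 < C) (hx : 0 < x) :
    A / √(A / C) + C * √(A / C) ≤ A / x + C * x := by
  set s := √(A / C)
  have hs : 0 < s := Real.sqrt_pos.mpr (div_pos hA hC)
  have hAs : A = C * s ^ 2 := by rw [Real.sq_sqrt (div_pos hA hC).le]; field_simp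
  rw [div_add' _ _ _ hs.ne', div_add' _ _ _ hx.ne', div_le_div_iff₀ hs hx, hAs]
  nlinarith [mul_nonneg (mul_nonneg hC.le hs.le) (sq_nonneg (x - s))]

/-- Jensen's inequality for `t ↦ 1/t` at the points `x i / r i`, with weights proportional to
`g i * r i`. -/
lemma inv_sum_mul_le_sum_mul_sq_div {ι : Type*} [Fintype ι] {g r x : ι → ℝ}
    (hg : ∀ i, 0 < g i) (hx : ∀ i, 0 < x i) (hr : ∑ i, g i * r i ≠ 0) :
    (∑ i, g i * x i)⁻¹ ≤ (∑ i, g i * r i ^ 2 / x i) / (∑ i, g i * r i) ^ 2 := by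
  have titu := sq_sum_div_le_sum_sq_div univ (fun i => g i * r i)
    (fun i _ => mul_pos (hg i) (hx i))
  have hterm : ∀ i, (g i * r i) ^ 2 / (g i * x i) = g i * r i ^ 2 / x i := fun i => by
    field_simp [(hg i).ne']
  simp only [hterm] at titu
  rwa [le_div_iff₀ (pow_two_pos_of_ne_zero hr), inv_mul_eq_div]

lemma Matrix.mulVec_pos {ι β : Type*} [Fintype ι] [Nonempty ι] {G : Matrix β ι ℝ}
    (hG : ∀ b k, 0 < G b k) {x : ι → ℝ} (hx : ∀ k, 0 < x k) (b : β) : 0 < (G *ᵥ x) b :=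
  sum_pos (fun k _ => mul_pos (hG b k) (hx k)) univ_nonempty

namespace VarianceUpdate

variable {ι β : Type*} [Fintype ι] [Fintype β]
  (F : ℝ) (G : Matrix β ι ℝ) (u : β → ℝ) (p : ι → ℝ)

noncomputable def columnCost (x : ι → ℝ) : ℝ :=
  (∑ k, (p k / x k + F * Real.log (x k))) +
  ∑ b, (F * Real.log ((G *ᵥ x) b) + u b / (2 * (G *ᵥ x) b))

noncomputable def columnSurrogate (r x : ι → ℝ) : ℝ :=
  (∑ k, (p k / x k + F * (Real.log (r k) + x k / r k - 1))) +
  ∑ b, (F * (Real.log ((G *ᵥ r) b) + (G *ᵥ x) b / (G *ᵥ r) b - 1) +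
    ∑ k, u b * G b k * r k ^ 2 / (2 * (G *ᵥ r) b ^ 2 * x k))

noncomputable def updateNum (r : ι → ℝ) (k : ι) : ℝ :=
  p k + ∑ b, u b * G b k * r k ^ 2 / (2 * (G *ᵥ r) b ^ 2)

noncomputable def updateDen (r : ι → ℝ) (k : ι) : ℝ :=
  F / r k + F * ∑ b, G b k / (G *ᵥ r) b

noncomputable def update (r : ι → ℝ) (k : ι) : ℝ :=
  √(updateNum G u p r k / updateDen F G r k)

variable {F G u p}

lemma columnCost_le_columnSurrogate [Nonempty ι] (hF : 0 ≤ F) (hG : ∀ b k, 0 < G b k)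
    (hu : ∀ b, 0 ≤ u b) {r x : ι → ℝ} (hr : ∀ k, 0 < r k) (hx : ∀ k, 0 < x k) :
    columnCost F G u p x ≤ columnSurrogate F G u p r x := by
  refine add_le_add (sum_le_sum fun k _ => ?_) (sum_le_sum fun b _ => ?_)
  · gcongr
    exact Real.log_le_log_add_div_sub_one (hr k) (hx k)
  · have hGr := mulVec_pos hG hr b
    gcongr
    · exact Real.log_le_log_add_div_sub_one hGr (mulVec_pos hG hx b)
    · have jensen := inv_sum_mul_le_sum_mul_sq_div (hG b) hx hGr.ne'
      calc u b / (2 * (G *ᵥ x) b) = u b / 2 * ((G *ᵥ x) b)⁻¹ := by ring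
        _ ≤ u b / 2 * ((∑ k, G b k * r k ^ 2 / x k) / (G *ᵥ r) b ^ 2) := by
          gcongr
          exacts [div_nonneg (hu b) zero_le_two, jensen]
        _ = ∑ k, u b * G b k * r k ^ 2 / (2 * (G *ᵥ r) b ^ 2 * x k) := by
          rw [mul_div_assoc', mul_sum, sum_div]
          exact sum_congr rfl fun k _ => by ring

lemma columnSurrogate_self [Nonempty ι] (hG : ∀ b k, 0 < G b k) {r : ι → ℝ}
    (hr : ∀ k, 0 < r k) : columnSurrogate F G u p r r = columnCost F G u p r := by
  unfold columnSurrogate columnCost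
  congr 1 <;> refine sum_congr rfl fun i _ => ?_
  · rw [div_self (hr i).ne']
    ring
  · have hGr := mulVec_pos hG hr i
    have hsum : ∑ k, u i * G i k * r k ^ 2 / (2 * (G *ᵥ r) i ^ 2 * r k)
        = u i / (2 * (G *ᵥ r) i ^ 2) * (G *ᵥ r) i := by
      rw [mulVec, dotProduct, mul_sum]
      exact sum_congr rfl fun k _ => by field_simp [(hr k).ne']
    rw [hsum, div_self hGr.ne']
    field_simp
    ring

lemma columnSurrogate_eq (r x : ι → ℝ) :
    columnSurrogate F G u p r x =
      (∑ k, (updateNum G u p r k / x k + updateDen F G r k * x k)) +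
      ((∑ k, F * (Real.log (r k) - 1)) + ∑ b, F * (Real.log ((G *ᵥ r) b) - 1)) := by
  have hnum : ∑ k, (∑ b, u b * G b k * r k ^ 2 / (2 * (G *ᵥ r) b ^ 2)) / x k
      = ∑ b, ∑ k, u b * G b k * r k ^ 2 / (2 * (G *ᵥ r) b ^ 2 * x k) := by
    simp only [sum_div, div_div]
    exact sum_comm
  have hden : ∑ k, F * (∑ b, G b k / (G *ᵥ r) b) * x k
      = ∑ b, F * ((G *ᵥ x) b / (G *ᵥ r) b) := by
    simp only [mulVec, dotProduct, mul_sum, sum_mul, sum_div]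
    rw [sum_comm]
    exact sum_congr rfl fun b _ => sum_congr rfl fun k _ => by ring
  simp only [columnSurrogate, updateNum, updateDen, add_div, add_mul, sum_add_distrib, hnum, hden,
    mul_add, mul_sub, sum_sub_distrib, div_mul_eq_mul_div]
  simp only [mul_div_assoc]
  ring

lemma updateNum_pos (hG : ∀ b k, 0 ≤ G b k) (hu : ∀ b, 0 ≤ u b) (hp : ∀ k, 0 < p k)
    (r : ι → ℝ) (k : ι) : 0 < updateNum G u p r k :=
  add_pos_of_pos_of_nonneg (hp k) <| sum_nonneg fun b _ =>
    div_nonneg (mul_nonneg (mul_nonneg (hu b) (hG b k)) (sq_nonneg _))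
      (mul_nonneg zero_le_two (sq_nonneg _))

lemma updateDen_pos [Nonempty ι] (hF : 0 < F) (hG : ∀ b k, 0 < G b k) {r : ι → ℝ}
    (hr : ∀ k, 0 < r k) (k : ι) : 0 < updateDen F G r k :=
  add_pos_of_pos_of_nonneg (div_pos hF (hr k)) <| mul_nonneg hF.le <| sum_nonneg fun b _ =>
    div_nonneg (hG b k).le (mulVec_pos hG hr b).le

lemma update_pos [Nonempty ι] (hF : 0 < F) (hG : ∀ b k, 0 < G b k) (hu : ∀ b, 0 ≤ u b)
    (hp : ∀ k, 0 < p k) {r : ι → ℝ} (hr : ∀ k, 0 < r k) (k : ι) : 0 < update F G u p r k :=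
  Real.sqrt_pos.mpr (div_pos (updateNum_pos (fun b k => (hG b k).le) hu hp r k)
    (updateDen_pos hF hG hr k))

lemma columnSurrogate_update_le [Nonempty ι] (hF : 0 < F) (hG : ∀ b k, 0 < G b k)
    (hu : ∀ b, 0 ≤ u b) (hp : ∀ k, 0 < p k) {r : ι → ℝ} (hr : ∀ k, 0 < r k) :
    columnSurrogate F G u p r (update F G u p r) ≤ columnSurrogate F G u p r r := by
  rw [columnSurrogate_eq, columnSurrogate_eq]
  gcongr ?_ + _
  exact sum_le_sum fun k _ => div_sqrt_add_mul_sqrt_le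
    (updateNum_pos (fun b k => (hG b k).le) hu hp r k) (updateDen_pos hF hG hr k) (hr k)

theorem columnCost_update_le [Nonempty ι] (hF : 0 < F) (hG : ∀ b k, 0 < G b k)
    (hu : ∀ b, 0 ≤ u b) (hp : ∀ k, 0 < p k) {r : ι → ℝ} (hr : ∀ k, 0 < r k) :
    columnCost F G u p (update F G u p r) ≤ columnCost F G u p r :=
  calc columnCost F G u p (update F G u p r)
      ≤ columnSurrogate F G u p r (update F G u p r) :=
        columnCost_le_columnSurrogate hF.le hG hu hr (update_pos hF hG hu hp hr)
    _ ≤ columnSurrogate F G u p r r := columnSurrogate_update_le hF hG hu hp hr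
    _ = columnCost F G u p r := columnSurrogate_self hG hr

lemma mul_sqrt_eq_update (hF : F ≠ 0) {r : ι → ℝ} {k : ι} (hr : 0 < r k) :
    r k * √((1 / F * p k * (r k)⁻¹ ^ 2 + ∑ b, G b k * (1 / (2 * F) * u b * ((G *ᵥ r) b)⁻¹ ^ 2)) /
      ((r k)⁻¹ + ∑ b, G b k * ((G *ᵥ r) b)⁻¹)) = update F G u p r k := by
  have hnum : updateNum G u p r k =
      F * r k ^ 2 *
        (1 / F * p k * (r k)⁻¹ ^ 2 + ∑ b, G b k * (1 / (2 * F) * u b * ((G *ᵥ r) b)⁻¹ ^ 2)) := by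
    rw [updateNum, mul_add, mul_sum]
    congr 1
    · field_simp
    · exact sum_congr rfl fun b _ => by field_simp
  have hden : updateDen F G r k = F * ((r k)⁻¹ + ∑ b, G b k * ((G *ᵥ r) b)⁻¹) := by
    simp only [updateDen, mul_add, div_eq_mul_inv]
  rw [update, hnum, hden, mul_assoc F, mul_div_mul_left _ _ hF, mul_div_assoc,
    Real.sqrt_mul (sq_nonneg _), Real.sqrt_sq hr.le]

end VarianceUpdate

open VarianceUpdate

lemma Jtilde_eq_sum_columnCost (B K N F : ℕ) (U : Matrix (Fin B) (Fin N) ℝ)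
    (P : Matrix (Fin K) (Fin N) ℝ) (G : Matrix (Fin B) (Fin K) ℝ) (R : Matrix (Fin K) (Fin N) ℝ) :
    Jtilde B K N F U P G R =
      ∑ n, columnCost F G (fun b => U b n) (fun k => P k n) (fun k => R k n) := by
  rw [Jtilde, ← sum_add_distrib]
  rfl

theorem variance_update_decreases_cost_general
    (B K N F : ℕ) (hK : 0 < K) (hF : 0 < F)
    (U : Matrix (Fin B) (Fin N) ℝ) (P : Matrix (Fin K) (Fin N) ℝ)
    (G : Matrix (Fin B) (Fin K) ℝ) (R : Matrix (Fin K) (Fin N) ℝ)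
    (hU : ∀ b n, 0 < U b n) (hP : ∀ k n, 0 < P k n)
    (hG : ∀ b k, 0 < G b k) (hR : ∀ k n, 0 < R k n)
    (Rplus : Matrix (Fin K) (Fin N) ℝ)
    (hRplus : ∀ k n, Rplus k n = R k n * Real.sqrt
      ((((1 / (F : ℝ)) * P k n * (R k n)⁻¹ ^ 2 +
          (Gᵀ * (Matrix.of fun (b : Fin B) (n : Fin N) =>
              (1 / (2 * (F : ℝ))) * U b n * ((G * R) b n)⁻¹ ^ 2) :
            Matrix (Fin K) (Fin N) ℝ) k n)) /
       ((R k n)⁻¹ +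
          (Gᵀ * (Matrix.of fun (b : Fin B) (n : Fin N) => ((G * R) b n)⁻¹) :
            Matrix (Fin K) (Fin N) ℝ) k n))) :
    Jtilde B K N F U P G Rplus ≤ Jtilde B K N F U P G R := by
  have : Nonempty (Fin K) := Fin.pos_iff_nonempty.mp hK
  have hF' : (0 : ℝ) < F := Nat.cast_pos.mpr hF
  have hcol : ∀ n, (fun k => Rplus k n) =
      update F G (fun b => U b n) (fun k => P k n) (fun k => R k n) := fun n => funext fun k => by
    rw [hRplus, ← mul_sqrt_eq_update (r := fun k => R k n) hF'.ne' (hR k n)]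
    simp only [mul_apply, transpose_apply, of_apply]
    rfl
  rw [Jtilde_eq_sum_columnCost, Jtilde_eq_sum_columnCost]
  exact sum_le_sum fun n _ => hcol n ▸
    columnCost_update_le hF' hG (fun b => (hU b n).le) (fun k => hP k n) (fun k => hR k n)

/-- Multiplicative update of the variance matrix `R` decreases the cost `J̃`. -/
theorem variance_update_decreases_cost
    (B K N F : ℕ) (hB : 0 < B) (hK : 0 < K) (hN : 0 < N) (hF : 0 < F)
    (U : Matrix (Fin B) (Fin N) ℝ) (P : Matrix (Fin K) (Fin N) ℝ)
    (G : Matrix (Fin B) (Fin K) ℝ) (R : Matrix (Fin K) (Fin N) ℝ)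
    (hU : ∀ b n, 0 < U b n) (hP : ∀ k n, 0 < P k n)
    (hG : ∀ b k, 0 < G b k) (hR : ∀ k n, 0 < R k n)
    (Rplus : Matrix (Fin K) (Fin N) ℝ)
    (hRplus : ∀ k n, Rplus k n = R k n * Real.sqrt
      ((((1 / (F : ℝ)) * P k n * (R k n)⁻¹ ^ 2 +
          (Gᵀ * (Matrix.of fun (b : Fin B) (n : Fin N) =>
              (1 / (2 * (F : ℝ))) * U b n * ((G * R) b n)⁻¹ ^ 2) :
            Matrix (Fin K) (Fin N) ℝ) k n)) /
       ((R k n)⁻¹ +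
          (Gᵀ * (Matrix.of fun (b : Fin B) (n : Fin N) => ((G * R) b n)⁻¹) :
            Matrix (Fin K) (Fin N) ℝ) k n))) :
    Jtilde B K N F U P G Rplus ≤ Jtilde B K N F U P G R :=
  variance_update_decreases_cost_general B K N F hK hF U P G R hU hP hG hR Rplus hRplus
end

section
/- Let B, K, N, F be positive integers and let U ∈ ℝ^{B×N}, P ∈ ℝ^{K×N}, G ∈ ℝ^{B×K}, R ∈ ℝ^{K×N} have all entries strictly positive. Define the augmented matrices Ũ ∈ ℝ^{(B+K)×N} by stacking (1/(2F))·U on top of (1/F)·P, and G̃ ∈ ℝ^{(B+K)×K} by stacking G on top of the K×K identity matrix I_K. Then Σ_{n=1}^N Σ_{k=1}^K ( P_{kn}/R_{kn} + F·log R_{kn} ) + Σ_{n=1}^N Σ_{b=1}^B ( F·log((GR)_{bn}) + U_{bn}/(2·(GR)_{bn}) ) = F · D_IS(Ũ ‖ G̃R) + F · Σ_{i=1}^{B+K} Σ_{n=1}^N ( log Ũ_{in} + 1 ), where D_IS(X ‖ Y) = Σ_{i,n} ( X_{in}/Y_{in} − log(X_{in}/Y_{in}) − 1 ) is the Itakura–Saito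 divergence between entrywise positive matrices of equal size. In particular, minimizing the left-hand side over (G, R) is equivalent to minimizing D_IS(Ũ ‖ G̃R). -/
open Finset Matrix

/-- Itakura–Saito divergence between two entrywise positive matrices of equal size:
`D_IS(X‖Y) = Σ_{i,n} (X_{in}/Y_{in} − log(X_{in}/Y_{in}) − 1)`. -/
noncomputable def ISdiv {I N : Type*} [Fintype I] [Fintype N]
    (X Y : Matrix I N ℝ) : ℝ :=
  ∑ i, ∑ n, (X i n / Y i n - Real.log (X i n / Y i n) - 1)

lemma key_entry (F x y : ℝ) (hx : x ≠ 0) (hy : y ≠ 0) :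
    F * (x / y - Real.log (x / y) - 1) + F * (Real.log x + 1)
      = F * (x / y) + F * Real.log y := by
  rw [Real.log_div hx hy]; ring

/-- The `(G,R)`-dependent block of the joint cost equals `F` times the Itakura–Saito
divergence `D_IS(Ũ ‖ G̃R)` for the augmented matrices `Ũ = [U/(2F); P/F]` and
`G̃ = [G; I_K]`, up to the additive term `F·Σ_{i,n}(log Ũ_{in} + 1)` (independent of
`G` and `R`), so minimizing it over `(G,R)` is equivalent to minimizing `D_IS(Ũ ‖ G̃R)`. -/
theorem cost_eq_IS_divergence
    (B K N F : ℕ) (hB : 0 < B) (hK : 0 < K) (hN : 0 < N) (hF : 0 < F)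
    (U : Matrix (Fin B) (Fin N) ℝ) (P : Matrix (Fin K) (Fin N) ℝ)
    (G : Matrix (Fin B) (Fin K) ℝ) (R : Matrix (Fin K) (Fin N) ℝ)
    (hU : ∀ b n, 0 < U b n) (hP : ∀ k n, 0 < P k n)
    (hG : ∀ b k, 0 < G b k) (hR : ∀ k n, 0 < R k n)
    (Utilde : Matrix (Fin B ⊕ Fin K) (Fin N) ℝ)
    (hUtilde : Utilde = Matrix.fromRows ((1 / (2 * (F : ℝ))) • U) ((1 / (F : ℝ)) • P))
    (Gtilde : Matrix (Fin B ⊕ Fin K) (Fin K) ℝ)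
    (hGtilde : Gtilde = Matrix.fromRows G (1 : Matrix (Fin K) (Fin K) ℝ)) :
    (∑ n, ∑ k, (P k n / R k n + (F : ℝ) * Real.log (R k n))) +
      (∑ n, ∑ b, ((F : ℝ) * Real.log ((G * R) b n) + U b n / (2 * (G * R) b n))) =
    (F : ℝ) * ISdiv Utilde (Gtilde * R) +
      (F : ℝ) * ∑ i, ∑ n, (Real.log (Utilde i n) + 1) := by
  have hF' : (0:ℝ) < F := by exact_mod_cast hF
  have hGR : ∀ b n, 0 < (G * R) b n := by
    intro b n
    exact Finset.sum_pos (fun k _ => mul_pos (hG b k) (hR k n)) ⟨⟨0, hK⟩, mem_univ _⟩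
  subst hUtilde hGtilde
  have hmul : Matrix.fromRows G (1 : Matrix (Fin K) (Fin K) ℝ) * R
      = Matrix.fromRows (G * R) R := by
    rw [Matrix.fromRows_mul, Matrix.one_mul]
  rw [hmul]
  unfold ISdiv
  conv_rhs => rw [Finset.mul_sum, Finset.mul_sum, ← Finset.sum_add_distrib, Fintype.sum_sum_type]
  conv_lhs => rw [Finset.sum_comm, Finset.sum_comm (f := fun n b => (F : ℝ) * Real.log ((G * R) b n) + U b n / (2 * (G * R) b n))]
  rw [add_comm]
  congr 1
  · apply Finset.sum_congr rfl
    intro b _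
    rw [← mul_add, ← Finset.sum_add_distrib, Finset.mul_sum]
    apply Finset.sum_congr rfl
    intro n _
    simp only [Matrix.fromRows_apply_inl, Matrix.smul_apply, smul_eq_mul]
    rw [mul_add, key_entry _ _ _
      (mul_pos (one_div_pos.mpr (mul_pos two_pos hF')) (hU b n)).ne' (hGR b n).ne']
    have hx : (F:ℝ) * (1 / (2*(F:ℝ)) * U b n / (G*R) b n) = U b n / (2 * (G*R) b n) := by
      rw [div_mul_eq_mul_div, one_mul, div_div,
        show (2*(F:ℝ)*((G*R) b n)) = (F:ℝ) * (2*(G*R) b n) by ring,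
        ← mul_div_assoc, mul_div_mul_left _ _ hF'.ne']
    rw [hx]; ring
  · apply Finset.sum_congr rfl
    intro k _
    rw [← mul_add, ← Finset.sum_add_distrib, Finset.mul_sum]
    apply Finset.sum_congr rfl
    intro n _
    simp only [Matrix.fromRows_apply_inr, Matrix.smul_apply, smul_eq_mul]
    rw [mul_add, key_entry _ _ _
      (mul_pos (one_div_pos.mpr hF') (hP k n)).ne' (hR k n).ne']
    have hx : (F:ℝ) * (1 / (F:ℝ) * P k n / R k n) = P k n / R k n := by
      rw [div_mul_eq_mul_div, one_mul, div_div, ← mul_div_assoc, mul_div_mul_left _ _ hF'.ne']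
    rw [hx]
end
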